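/- For any Kripke model M and binary relation modality ◇ interpreted by R, the enrichment of M with the transitive closure (R)⁺ interpreted as a new modality ⟨e⁺⟩ validates the axioms A3 (⟨e⟩p → ⟨e⁺⟩p), A4 (⟨e⟩⟨e⁺⟩p → ⟨e⁺⟩p), and A5 (⟨e⁺⟩p → ⟨e⟩p ∨ ⟨e⁺⟩(¬p ∧ ⟨e⟩p)) at every point under every valuation. -/

import Mathlib

inductive Fm (A : Type) : Type
  | bot : Fm A
  | var : ℕ → Fm A
  | imp : Fm A → Fm A → Fm A
  | dia : A → Fm A → Fm A

namespace Fm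
variable {A B : Type}
def neg (φ : Fm A) : Fm A := imp φ bot
def disj (φ ψ : Fm A) : Fm A := imp (neg φ) ψ
def conj (φ ψ : Fm A) : Fm A := neg (imp φ (neg ψ))
def equiv (φ ψ : Fm A) : Fm A := conj (imp φ ψ) (imp ψ φ)
def box (a : A) (φ : Fm A) : Fm A := neg (dia a (neg φ))
def map (f : A → B) : Fm A → Fm B
  | bot => bot
  | var n => var n
  | imp φ ψ => imp (map f φ) (map f ψ)
  | dia a φ => dia (f a) (map f φ)
end Fm

structure Model (A : Type) where
  W : Type
  R : A → W → W → Prop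
  V : ℕ → W → Prop

def Sat {A : Type} (M : Model A) : M.W → Fm A → Prop
  | _, .bot => False
  | x, .var n => M.V n x
  | x, .imp φ ψ => Sat M x φ → Sat M x ψ
  | x, .dia a φ => ∃ y, M.R a x y ∧ Sat M y φ

def Model.valid {A : Type} (M : Model A) (φ : Fm A) : Prop := ∀ x, Sat M x φ

def Model.validSet {A : Type} (M : Model A) (L : Set (Fm A)) : Prop := ∀ φ ∈ L, M.valid φ

def SubClosed {A : Type} (Γ : Set (Fm A)) : Prop :=
  (∀ φ ψ : Fm A, Fm.imp φ ψ ∈ Γ → φ ∈ Γ ∧ ψ ∈ Γ) ∧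
  (∀ (a : A) (φ : Fm A), Fm.dia a φ ∈ Γ → φ ∈ Γ)

/-- `x ∼_Γ y`: x and y satisfy the same formulas of Γ in M. -/
def ModEqv {A : Type} (M : Model A) (Γ : Set (Fm A)) (x y : M.W) : Prop :=
  ∀ φ ∈ Γ, (Sat M x φ ↔ Sat M y φ)

def eqvSetoid {A : Type} (M : Model A) (Γ : Set (Fm A)) : Setoid M.W :=
  ⟨ModEqv M Γ, ⟨fun _ _ _ => Iff.rfl, fun h φ hφ => (h φ hφ).symm,
    fun h1 h2 φ hφ => (h1 φ hφ).trans (h2 φ hφ)⟩⟩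

def filtModel {A : Type} (M : Model A) (s : Setoid M.W)
    (R' : A → Quotient s → Quotient s → Prop) (V' : ℕ → Quotient s → Prop) : Model A :=
  ⟨Quotient s, R', V'⟩

/-- `(filtModel M s R' V')` is a Γ-filtration of M through the equivalence s. -/
structure ModelIsFiltration {A : Type} (M : Model A) (Γ : Set (Fm A)) (s : Setoid M.W)
    (R' : A → Quotient s → Quotient s → Prop) (V' : ℕ → Quotient s → Prop) : Prop where
  refines : ∀ x y : M.W, s.r x y → ModEqv M Γ x y
  val : ∀ n : ℕ, Fm.var n ∈ Γ → ∀ x : M.W, (V' n (Quotient.mk s x) ↔ M.V n x)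
  min_sub : ∀ (a : A) (x y : M.W), M.R a x y → R' a (Quotient.mk s x) (Quotient.mk s y)
  sub_max : ∀ (a : A) (x y : M.W), R' a (Quotient.mk s x) (Quotient.mk s y) →
      ∀ φ : Fm A, Fm.dia a φ ∈ Γ → Sat M y φ → Sat M x (Fm.dia a φ)

/-- L admits definable filtration. -/
def AdmitsDefFilt {A : Type} (L : Set (Fm A)) : Prop :=
  ∀ M : Model A, M.validSet L → ∀ Γ : Set (Fm A), Γ.Finite → SubClosed Γ →
    ∃ Δ : Set (Fm A), Δ.Finite ∧ Γ ⊆ Δ ∧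
      ∃ (R' : A → Quotient (eqvSetoid M Δ) → Quotient (eqvSetoid M Δ) → Prop)
        (V' : ℕ → Quotient (eqvSetoid M Δ) → Prop),
        Finite (Quotient (eqvSetoid M Δ)) ∧
        ModelIsFiltration M Γ (eqvSetoid M Δ) R' V' ∧
        (filtModel M (eqvSetoid M Δ) R' V').validSet L

/-- Walking back from `y`, the first point outside `p` gives the entry step; if there is none, the
whole path lies in `p`, and so does its first step. -/
theorem Relation.TransGen.exists_rel_or_exists_entry {α : Type*} {r : α → α → Prop}
    {p : α → Prop} {x y : α} (hxy : Relation.TransGen r x y) (hy : p y) :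
    (∃ y, r x y ∧ p y) ∨ ∃ z, Relation.TransGen r x z ∧ ¬ p z ∧ ∃ w, r z w ∧ p w := by
  induction hxy with
  | single hxy => exact .inl ⟨_, hxy, hy⟩
  | @tail z w hxz hzw ih =>
    by_cases hz : p z
    · exact ih hz
    · exact .inr ⟨z, hxz, hz, w, hzw, hy⟩

section Semantics

variable {A : Type} (M : Model A) (x : M.W)

@[simp] theorem sat_imp (φ ψ : Fm A) : Sat M x (.imp φ ψ) ↔ (Sat M x φ → Sat M x ψ) := Iff.rfl

@[simp] theorem sat_dia (a : A) (φ : Fm A) :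
    Sat M x (.dia a φ) ↔ ∃ y, M.R a x y ∧ Sat M y φ := Iff.rfl

@[simp] theorem sat_neg (φ : Fm A) : Sat M x φ.neg ↔ ¬ Sat M x φ := Iff.rfl

@[simp] theorem sat_disj (φ ψ : Fm A) : Sat M x (φ.disj ψ) ↔ Sat M x φ ∨ Sat M x ψ := by
  rw [Fm.disj, sat_imp, sat_neg, or_iff_not_imp_left]

@[simp] theorem sat_conj (φ ψ : Fm A) : Sat M x (φ.conj ψ) ↔ Sat M x φ ∧ Sat M x ψ := by
  rw [Fm.conj, sat_neg, sat_imp, sat_neg, Classical.not_imp, not_not]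

end Semantics

/-- Enriching a model with the transitive closure of R validates A3, A4, A5.
Modalities: `true` is ⟨e⟩ (relation R), `false` is ⟨e⁺⟩ (relation R⁺). -/
theorem transitive_closure_enrichment_validates (W : Type) (R : W → W → Prop)
    (V : ℕ → W → Prop) (x : W) :
    Sat (Model.mk W (fun b : Bool => if b then R else Relation.TransGen R) V) x
      (Fm.imp (Fm.dia true (Fm.var 0)) (Fm.dia false (Fm.var 0))) ∧
    Sat (Model.mk W (fun b : Bool => if b then R else Relation.TransGen R) V) x
      (Fm.imp (Fm.dia true (Fm.dia false (Fm.var 0))) (Fm.dia false (Fm.var 0))) ∧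
    Sat (Model.mk W (fun b : Bool => if b then R else Relation.TransGen R) V) x
      (Fm.imp (Fm.dia false (Fm.var 0))
        (Fm.disj (Fm.dia true (Fm.var 0))
          (Fm.dia false (Fm.conj (Fm.neg (Fm.var 0)) (Fm.dia true (Fm.var 0)))))) := by
  simp only [sat_imp, sat_dia, sat_disj, sat_conj, sat_neg, ↓reduceIte,
    Bool.false_eq_true]
  exact ⟨fun ⟨y, hxy, hy⟩ => ⟨y, .single hxy, hy⟩,
    fun ⟨_, hxy, z, hyz, hz⟩ => ⟨z, .head hxy hyz, hz⟩,
    fun ⟨_, hxy, hy⟩ => hxy.exists_rel_or_exists_entry hy⟩
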